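/- Let σ₀ determine a weak, graded Riemannian metric on a Hilbertian H-type group M = V ⊕ W, with associated operator A. Suppose a Levi-Civita covariant derivative ∇ for σ exists. Then for every x = x₁ + x₂ ∈ M with x₁ ∈ V and x₂ ∈ W, the vector J_{A x₂} x₁ lies in the range of A, and A((∇_{X_x} X_x)(0)) = −J_{A x₂} x₁. -/
import Mathlib


open scoped RealInnerProductSpace

/-- A Hilbertian H-type group: a real Hilbert space `M` with an orthogonal decomposition
`M = V ⊕ W` into nontrivial closed subspaces, `W` finite dimensional, a continuous
skew-symmetric Lie bracket with `[M,M] ⊆ W`, `[M,W] = 0`, and the map `J` determined by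
`⟪J z x, y⟫ = ⟪z, [x,y]⟫` satisfying `J_z ∘ J_z = -‖z‖² id` on `V`. -/
structure HTypeGroup (M : Type*) [NormedAddCommGroup M] [InnerProductSpace ℝ M]
    [CompleteSpace M] where
  V : Submodule ℝ M
  W : Submodule ℝ M
  V_closed : IsClosed (V : Set M)
  W_closed : IsClosed (W : Set M)
  V_nontrivial : V ≠ ⊥
  W_nontrivial : W ≠ ⊥
  W_findim : FiniteDimensional ℝ ↥W
  orthogonal : ∀ v ∈ V, ∀ w ∈ W, ⟪v, w⟫ = 0
  proj1 : M →L[ℝ] M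
  proj2 : M →L[ℝ] M
  proj1_mem : ∀ v : M, proj1 v ∈ V
  proj2_mem : ∀ v : M, proj2 v ∈ W
  proj_add : ∀ v : M, proj1 v + proj2 v = v
  bracket : M →L[ℝ] M →L[ℝ] M
  bracket_skew : ∀ u v : M, bracket u v = - bracket v u
  bracket_mem_W : ∀ u v : M, bracket u v ∈ W
  bracket_W : ∀ u : M, ∀ w ∈ W, bracket u w = 0
  Jmap : M →L[ℝ] M →L[ℝ] M
  Jmap_mem_V : ∀ z ∈ W, ∀ x ∈ V, Jmap z x ∈ V
  Jmap_inner : ∀ z ∈ W, ∀ x ∈ V, ∀ y ∈ V, ⟪Jmap z x, y⟫ = ⟪z, bracket x y⟫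
  Jmap_sq : ∀ z ∈ W, ∀ x ∈ V, Jmap z (Jmap z x) = -(‖z‖ ^ 2) • x

/-- The left invariant metric at the point `p`:
`σ_p(v, w) = σ₀(v − (1/2)[p,v], w − (1/2)[p,w])`. -/
noncomputable def sigmaAt {M : Type*} [NormedAddCommGroup M] [InnerProductSpace ℝ M] [CompleteSpace M]
    (H : HTypeGroup M) (σ : M → M → ℝ) (p v w : M) : ℝ :=
  σ (v - (2⁻¹ : ℝ) • H.bracket p v) (w - (2⁻¹ : ℝ) • H.bracket p w)

/-- The left invariant vector field `X_v(p) = v + (1/2)[p, v]`. -/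
noncomputable def leftInvVF {M : Type*} [NormedAddCommGroup M] [InnerProductSpace ℝ M] [CompleteSpace M]
    (H : HTypeGroup M) (v : M) : M → M :=
  fun p => v + (2⁻¹ : ℝ) • H.bracket p v

/-- A Levi-Civita covariant derivative for the left invariant metric `σ` determined by `σ₀`:
an ℝ-bilinear operation on smooth vector fields, sending smooth vector fields to a smooth
vector field, tensorial in the first argument, satisfying the Leibniz rule in the second
argument, torsion-free, and compatible with the metric `σ`. -/
def IsLeviCivita {M : Type*} [NormedAddCommGroup M] [InnerProductSpace ℝ M] [CompleteSpace M]
    (H : HTypeGroup M) (σ : M → M → ℝ)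
    (D : (M → M) → (M → M) → (M → M)) : Prop :=
  (∀ X Y : M → M, ContDiff ℝ (⊤ : ℕ∞) X → ContDiff ℝ (⊤ : ℕ∞) Y → ContDiff ℝ (⊤ : ℕ∞) (D X Y)) ∧
  (∀ X X' Y : M → M, ContDiff ℝ (⊤ : ℕ∞) X → ContDiff ℝ (⊤ : ℕ∞) X' → ContDiff ℝ (⊤ : ℕ∞) Y →
      D (X + X') Y = D X Y + D X' Y) ∧
  (∀ X Y Y' : M → M, ContDiff ℝ (⊤ : ℕ∞) X → ContDiff ℝ (⊤ : ℕ∞) Y → ContDiff ℝ (⊤ : ℕ∞) Y' →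
      D X (Y + Y') = D X Y + D X Y') ∧
  (∀ (c : ℝ) (X Y : M → M), ContDiff ℝ (⊤ : ℕ∞) X → ContDiff ℝ (⊤ : ℕ∞) Y →
      D (c • X) Y = c • D X Y ∧ D X (c • Y) = c • D X Y) ∧
  (∀ (f : M → ℝ) (X Y : M → M), ContDiff ℝ (⊤ : ℕ∞) f → ContDiff ℝ (⊤ : ℕ∞) X → ContDiff ℝ (⊤ : ℕ∞) Y →
      D (fun p => f p • X p) Y = fun p => f p • D X Y p) ∧
  (∀ (f : M → ℝ) (X Y : M → M), ContDiff ℝ (⊤ : ℕ∞) f → ContDiff ℝ (⊤ : ℕ∞) X → ContDiff ℝ (⊤ : ℕ∞) Y →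
      D X (fun p => f p • Y p) =
        fun p => (fderiv ℝ f p (X p)) • Y p + f p • D X Y p) ∧
  (∀ X Y : M → M, ContDiff ℝ (⊤ : ℕ∞) X → ContDiff ℝ (⊤ : ℕ∞) Y → ∀ p : M,
      D X Y p - D Y X p = fderiv ℝ Y p (X p) - fderiv ℝ X p (Y p)) ∧
  (∀ X Y Z : M → M, ContDiff ℝ (⊤ : ℕ∞) X → ContDiff ℝ (⊤ : ℕ∞) Y → ContDiff ℝ (⊤ : ℕ∞) Z → ∀ p : M,
      fderiv ℝ (fun q => sigmaAt H σ q (X q) (Y q)) p (Z p) =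
        sigmaAt H σ p (D Z X p) (Y p) + sigmaAt H σ p (X p) (D Z Y p))

/-- Let `σ₀` determine a weak, graded Riemannian metric on a Hilbertian
H-type group `M = V ⊕ W`, with associated operator `A` (`σ₀ v w = ⟪v, A w⟫`). If a
Levi-Civita covariant derivative `∇` for `σ` exists, then for every `x = x₁ + x₂` with
`x₁ ∈ V`, `x₂ ∈ W`, the vector `J_{A x₂} x₁` lies in the range of `A` and
`A((∇_{X_x} X_x)(0)) = − J_{A x₂} x₁`. -/
theorem statement_13 {M : Type*} [NormedAddCommGroup M] [InnerProductSpace ℝ M]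
    [CompleteSpace M] (H : HTypeGroup M) (σ : M → M → ℝ)
    (h_symm : ∀ v w : M, σ v w = σ w v)
    (h_posdef : ∀ v : M, v ≠ 0 → 0 < σ v v)
    (c₀ : ℝ) (hc₀ : 0 < c₀)
    (h_cont : ∀ v : M, Real.sqrt (σ v v) ≤ c₀ * ‖v‖)
    (h_graded : ∀ v ∈ H.V, ∀ w ∈ H.W, σ v w = 0)
    (A : M →L[ℝ] M) (hA : ∀ v w : M, σ v w = ⟪v, A w⟫)
    (D : (M → M) → (M → M) → (M → M)) (hD : IsLeviCivita H σ D) :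
    ∀ x₁ ∈ H.V, ∀ x₂ ∈ H.W,
      H.Jmap (A x₂) x₁ ∈ Set.range A ∧
      A (D (leftInvVF H (x₁ + x₂)) (leftInvVF H (x₁ + x₂)) 0) = - H.Jmap (A x₂) x₁ := by
  intro x₁ hx₁ x₂ hx₂
  obtain ⟨_, _, _, _, _, _, htor, hcompat⟩ := hD
  set x : M := x₁ + x₂ with hxdef
  -- basic facts about leftInvVF
  have hXeq : ∀ v : M, leftInvVF H v = fun p => v + ((2⁻¹ : ℝ) • H.bracket.flip v) p := by
    intro v; funext p
    simp [leftInvVF, ContinuousLinearMap.smul_apply, ContinuousLinearMap.flip_apply]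
  have hXsmooth : ∀ v : M, ContDiff ℝ (⊤ : ℕ∞) (leftInvVF H v) := by
    intro v; rw [hXeq]
    exact contDiff_const.add ((2⁻¹ • H.bracket.flip v).contDiff)
  have hfd : ∀ v p : M, fderiv ℝ (leftInvVF H v) p = ((2⁻¹ : ℝ) • H.bracket.flip v) := by
    intro v p
    rw [hXeq]
    exact ((((2⁻¹ : ℝ) • H.bracket.flip v).hasFDerivAt).const_add v).fderiv
  have hX0 : ∀ v : M, leftInvVF H v 0 = v := by
    intro v; simp [leftInvVF]
  have hσ0 : ∀ v w : M, sigmaAt H σ 0 v w = σ v w := by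
    intro v w; simp [sigmaAt]
  -- left invariance of the metric on left invariant vector fields
  have hred : ∀ v q : M, leftInvVF H v q - (2⁻¹ : ℝ) • H.bracket q (leftInvVF H v q) = v := by
    intro v q
    have h0 : H.bracket q ((2⁻¹ : ℝ) • H.bracket q v) = 0 := by
      rw [map_smul, H.bracket_W q _ (H.bracket_mem_W q v), smul_zero]
    simp only [leftInvVF, map_add, h0, add_zero]
    abel
  have hconst : ∀ v u : M,
      (fun q => sigmaAt H σ q (leftInvVF H v q) (leftInvVF H u q)) = fun _ => σ v u := by
    intro v u; funext q
    unfold sigmaAt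
    rw [hred, hred]
  have hder0 : ∀ (c : ℝ) (u : M), fderiv ℝ (fun _ : M => c) 0 u = 0 := by
    intro c u; simp
  -- linearity of σ in the second argument
  have hσadd : ∀ a b c : M, σ a (b + c) = σ a b + σ a c := by
    intro a b c; simp [hA, map_add, inner_add_right]
  -- (b) : σ(x, ∇_{X_w} X_x (0)) = 0
  have hb : ∀ w : M, σ x (D (leftInvVF H w) (leftInvVF H x) 0) = 0 := by
    intro w
    have h := hcompat (leftInvVF H x) (leftInvVF H x) (leftInvVF H w)
      (hXsmooth x) (hXsmooth x) (hXsmooth w) 0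
    rw [hconst x x, hder0, hσ0, hσ0, hX0] at h
    rw [h_symm (D (leftInvVF H w) (leftInvVF H x) 0) x] at h
    linarith
  -- torsion-free at 0
  have htor0 : ∀ w : M, D (leftInvVF H x) (leftInvVF H w) 0
      = D (leftInvVF H w) (leftInvVF H x) 0 + H.bracket x w := by
    intro w
    have h := htor (leftInvVF H x) (leftInvVF H w) (hXsmooth x) (hXsmooth w) 0
    rw [hfd, hfd, hX0, hX0] at h
    have hb2 : ((2⁻¹ : ℝ) • H.bracket.flip w) x - ((2⁻¹ : ℝ) • H.bracket.flip x) w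
        = H.bracket x w := by
      simp only [ContinuousLinearMap.smul_apply, ContinuousLinearMap.flip_apply]
      rw [H.bracket_skew w x]
      module
    rw [hb2, sub_eq_iff_eq_add] at h
    rw [h, add_comm]
  -- A x₂ ∈ W
  have hAW : A x₂ ∈ H.W := by
    have horth : ⟪H.proj1 (A x₂), H.proj2 (A x₂)⟫ = 0 :=
      H.orthogonal _ (H.proj1_mem _) _ (H.proj2_mem _)
    have hsum : ⟪H.proj1 (A x₂), H.proj1 (A x₂)⟫ + ⟪H.proj1 (A x₂), H.proj2 (A x₂)⟫
        = ⟪H.proj1 (A x₂), A x₂⟫ := by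
      rw [← inner_add_right, H.proj_add]
    have hg : σ (H.proj1 (A x₂)) x₂ = 0 := h_graded _ (H.proj1_mem _) _ hx₂
    rw [hA] at hg
    have h0 : H.proj1 (A x₂) = 0 := by
      have : ⟪H.proj1 (A x₂), H.proj1 (A x₂)⟫ = 0 := by linarith
      exact inner_self_eq_zero.mp this
    have := H.proj_add (A x₂)
    rw [h0, zero_add] at this
    rw [← this]
    exact H.proj2_mem _
  -- bracket reduction
  have hbr : ∀ w : M, H.bracket x w = H.bracket x₁ (H.proj1 w) := by
    intro w
    have h2 : H.bracket x₂ w = 0 := by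
      rw [H.bracket_skew, H.bracket_W w x₂ hx₂, neg_zero]
    have h3 : H.bracket x₁ (H.proj2 w) = 0 := H.bracket_W x₁ _ (H.proj2_mem w)
    calc H.bracket x w = H.bracket x₁ w + H.bracket x₂ w := by
          rw [hxdef]; simp [map_add]
      _ = H.bracket x₁ w := by rw [h2, add_zero]
      _ = H.bracket x₁ (H.proj1 w) + H.bracket x₁ (H.proj2 w) := by
          rw [← map_add, H.proj_add]
      _ = H.bracket x₁ (H.proj1 w) := by rw [h3, add_zero]
  -- the scalar identity σ(x, [x,w]) = ⟪J_{Ax₂} x₁, w⟫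
  have hscal : ∀ w : M, σ x (H.bracket x w) = ⟪H.Jmap (A x₂) x₁, w⟫ := by
    intro w
    have hbw : H.bracket x₁ (H.proj1 w) ∈ H.W := H.bracket_mem_W _ _
    have hJV : H.Jmap (A x₂) x₁ ∈ H.V := H.Jmap_mem_V _ hAW _ hx₁
    rw [hbr w]
    have step1 : σ x (H.bracket x₁ (H.proj1 w))
        = σ x₁ (H.bracket x₁ (H.proj1 w)) + σ x₂ (H.bracket x₁ (H.proj1 w)) := by
      rw [hxdef, hA, hA, hA, inner_add_left]
    have step2 : σ x₂ (H.bracket x₁ (H.proj1 w)) = ⟪A x₂, H.bracket x₁ (H.proj1 w)⟫ := by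
      rw [h_symm, hA, real_inner_comm]
    have step3 : ⟪A x₂, H.bracket x₁ (H.proj1 w)⟫ = ⟪H.Jmap (A x₂) x₁, H.proj1 w⟫ :=
      (H.Jmap_inner _ hAW _ hx₁ _ (H.proj1_mem w)).symm
    have step4 : ⟪H.Jmap (A x₂) x₁, H.proj1 w⟫ = ⟪H.Jmap (A x₂) x₁, w⟫ := by
      have hs : ⟪H.Jmap (A x₂) x₁, H.proj1 w⟫ + ⟪H.Jmap (A x₂) x₁, H.proj2 w⟫
          = ⟪H.Jmap (A x₂) x₁, w⟫ := by
        rw [← inner_add_right, H.proj_add]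
      have hz : ⟪H.Jmap (A x₂) x₁, H.proj2 w⟫ = 0 :=
        H.orthogonal _ hJV _ (H.proj2_mem w)
      linarith
    rw [step1, h_graded x₁ hx₁ _ hbw, zero_add, step2, step3, step4]
  -- the main identity
  have hmain : ∀ w : M, σ (D (leftInvVF H x) (leftInvVF H x) 0) w
      = -⟪H.Jmap (A x₂) x₁, w⟫ := by
    intro w
    have h := hcompat (leftInvVF H x) (leftInvVF H w) (leftInvVF H x)
      (hXsmooth x) (hXsmooth w) (hXsmooth x) 0
    rw [hconst x w, hder0, hσ0, hσ0, hX0, hX0, htor0 w, hσadd, hb w, zero_add,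
      hscal w] at h
    linarith
  -- conclusion
  have hfinal : A (D (leftInvVF H x) (leftInvVF H x) 0) = - H.Jmap (A x₂) x₁ := by
    have hw : ∀ w : M, ⟪w, A (D (leftInvVF H x) (leftInvVF H x) 0) + H.Jmap (A x₂) x₁⟫ = 0 := by
      intro w
      rw [inner_add_right]
      have h1 : ⟪w, A (D (leftInvVF H x) (leftInvVF H x) 0)⟫
          = σ (D (leftInvVF H x) (leftInvVF H x) 0) w := by
        rw [h_symm, hA]
      rw [h1, hmain w, real_inner_comm w]
      ring
    have h2 := hw (A (D (leftInvVF H x) (leftInvVF H x) 0) + H.Jmap (A x₂) x₁)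
    rw [inner_self_eq_zero] at h2
    exact eq_neg_of_add_eq_zero_left h2
  exact ⟨⟨-(D (leftInvVF H x) (leftInvVF H x) 0), by rw [map_neg, hfinal, neg_neg]⟩, hfinal⟩
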